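/- Let g be a gflow with extensive order ≺ and define g_Z(u) = g(u) △ (△_{v ∈ g(u)\(O∪{u})} g_Z(v)). Then g_Z is extensive with respect to the same order ≺: for all u ∈ Oᶜ and all w ∈ g_Z(u) ∪ Odd(g_Z(u)) with w ≠ u, u ≺ w. -/

import Mathlib

open scoped symmDiff

inductive Pauli | X | Y | Z
deriving DecidableEq

inductive MPlane | XY | XZ | YZ
deriving DecidableEq

/-- The set of Pauli operators defining a measurement plane. -/
def MPlane.paulis : MPlane → Finset Pauli
  | .XY => {.X, .Y}
  | .XZ => {.X, .Z}
  | .YZ => {.Y, .Z}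

variable {V : Type} [Fintype V] [DecidableEq V]

/-- Odd neighbourhood: vertices with an odd number of neighbours in `A`. -/
def oddNbhd (G : SimpleGraph V) [DecidableRel G.Adj] (A : Finset V) : Finset V :=
  Finset.univ.filter fun w => Odd (A.filter (G.Adj w)).card

/-- `f` is extensive w.r.t. the strict order `r`. -/
def IsExtensive (O : Finset V) (r : V → V → Prop) (f : V → Finset V) : Prop :=
  ∀ u ∉ O, ∀ v ∈ f u, v ≠ u → r u v

/-- gflow of an extended open graph `(G, I, O, lam)`. -/
def IsGflow (G : SimpleGraph V) [DecidableRel G.Adj]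
    (I O : Finset V) (lam : V → MPlane) (g : V → Finset V) : Prop :=
  (∀ u ∉ O, g u ⊆ Iᶜ) ∧
  (∃ r : V → V → Prop, IsStrictOrder V r ∧
    IsExtensive O r (fun u => g u ∪ oddNbhd G (g u))) ∧
  ∀ u ∉ O,
    (lam u = .XY → u ∈ oddNbhd G (g u) ∧ u ∉ g u) ∧
    (lam u = .XZ → u ∈ g u ∧ u ∈ oddNbhd G (g u)) ∧
    (lam u = .YZ → u ∈ g u ∧ u ∉ oddNbhd G (g u))

/-- σ-normal forms for gflows. -/
def IsNF (σ : Pauli) (G : SimpleGraph V) [DecidableRel G.Adj]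
    (O : Finset V) (g : V → Finset V) : Prop :=
  match σ with
  | .X => ∀ u ∉ O, oddNbhd G (g u) ⊆ insert u O
  | .Y => ∀ u ∉ O, (g u ∆ oddNbhd G (g u)) ⊆ insert u O
  | .Z => ∀ u ∉ O, g u ⊆ insert u O
instance : Std.Commutative (α := Finset V) (· ∆ ·) := ⟨symmDiff_comm⟩
instance : Std.Associative (α := Finset V) (· ∆ ·) := ⟨symmDiff_assoc⟩

/-- Iterated symmetric difference `△_{v ∈ s} f v`. -/
def symmDiffFold (s : Finset V) (f : V → Finset V) : Finset V :=
  s.fold (· ∆ ·) ∅ f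

/-!
Since `Odd` is linear, `gZ u ∪ Odd (gZ u)` is covered by `g u ∪ Odd (g u)` together with the sets
`gZ v ∪ Odd (gZ v)` for `v ∈ g u \ (O ∪ {u})`. Each such `v` satisfies `u ≺ v` by extensivity of `g`,
so well-founded induction along `≻` (the vertex set is finite) and transitivity of `≺` give the claim.
-/

open Finset

lemma card_symmDiff_add_two_mul_card_inter {α : Type*} [DecidableEq α] (s t : Finset α) :
    #(s ∆ t) + 2 * #(s ∩ t) = #s + #t := by
  have hs := card_sdiff_add_card_inter s t
  have ht := card_sdiff_add_card_inter t s
  rw [inter_comm] at ht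
  rw [symmDiff_def, sup_eq_union, card_union_of_disjoint disjoint_sdiff_sdiff]
  omega

lemma odd_card_symmDiff_iff {α : Type*} [DecidableEq α] (s t : Finset α) :
    Odd #(s ∆ t) ↔ (Odd #s ↔ Even #t) := by
  have := card_symmDiff_add_two_mul_card_inter s t
  simp only [Nat.odd_iff, Nat.even_iff]
  omega

lemma filter_symmDiff {α : Type*} [DecidableEq α] (p : α → Prop) [DecidablePred p]
    (s t : Finset α) : (s ∆ t).filter p = s.filter p ∆ t.filter p := by
  ext
  simp only [mem_filter, mem_symmDiff]
  tauto

section OddNeighbourhood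

variable (G : SimpleGraph V) [DecidableRel G.Adj]

lemma oddNbhd_symmDiff (A B : Finset V) :
    oddNbhd G (A ∆ B) = oddNbhd G A ∆ oddNbhd G B := by
  ext w
  simp only [oddNbhd, mem_filter, mem_univ, true_and, mem_symmDiff, filter_symmDiff,
    odd_card_symmDiff_iff, ← Nat.not_odd_iff_even]
  tauto

lemma union_oddNbhd_symmDiff_subset (A B : Finset V) :
    A ∆ B ∪ oddNbhd G (A ∆ B) ⊆ (A ∪ oddNbhd G A) ∪ (B ∪ oddNbhd G B) := by
  rw [oddNbhd_symmDiff]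
  intro w
  simp only [mem_union, mem_symmDiff]
  tauto

lemma union_oddNbhd_symmDiffFold_subset (s : Finset V) (f : V → Finset V) :
    symmDiffFold s f ∪ oddNbhd G (symmDiffFold s f) ⊆
      s.biUnion fun v => f v ∪ oddNbhd G (f v) := by
  induction s using Finset.induction with
  | empty => simp [symmDiffFold, oddNbhd]
  | insert a s ha ih =>
    rw [symmDiffFold, fold_insert ha, ← symmDiffFold, biUnion_insert]
    exact (union_oddNbhd_symmDiff_subset G _ _).trans (union_subset_union le_rfl ih)

end OddNeighbourhood

lemma IsExtensive.of_subset_union_biUnion {O : Finset V} {r : V → V → Prop} [IsStrictOrder V r]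
    {F H : V → Finset V} (hF : IsExtensive O r F)
    (hH : ∀ u ∉ O, H u ⊆ F u ∪ (F u \ insert u O).biUnion H) : IsExtensive O r H := by
  have wf : WellFounded (Function.swap r) := Finite.wellFounded_of_trans_of_irrefl _
  intro u
  induction u using wf.induction with
  | _ u ih =>
  intro hu w hw hwu
  rcases mem_union.1 (hH u hu hw) with hwF | hwH
  · exact hF u hu w hwF hwu
  obtain ⟨v, hv, hwHv⟩ := mem_biUnion.1 hwH
  obtain ⟨hvF, hvuO⟩ := mem_sdiff.1 hv
  have huv : r u v := hF u hu v hvF (by rintro rfl; simp at hvuO)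
  rcases eq_or_ne w v with rfl | hwv
  · exact huv
  · exact _root_.trans huv (ih v huv (fun h => hvuO (mem_insert_of_mem h)) w hwHv hwv)

theorem gZ_extensive_general (G : SimpleGraph V) [DecidableRel G.Adj]
    (O : Finset V) (g : V → Finset V)
    (r : V → V → Prop) (hr : IsStrictOrder V r)
    (hext : IsExtensive O r (fun u => g u ∪ oddNbhd G (g u)))
    (gZ : V → Finset V)
    (hgZ : ∀ u ∉ O, gZ u = g u ∆ symmDiffFold ((g u) \ insert u O) gZ) :
    IsExtensive O r (fun u => gZ u ∪ oddNbhd G (gZ u)) := by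
  refine hext.of_subset_union_biUnion fun u hu => ?_
  rw [hgZ u hu]
  refine (union_oddNbhd_symmDiff_subset G _ _).trans (union_subset_union le_rfl ?_)
  refine (union_oddNbhd_symmDiffFold_subset G _ _).trans
    (biUnion_subset_biUnion_of_subset_left _ ?_)
  exact sdiff_subset_sdiff subset_union_left le_rfl

/-- The recursively defined `g_Z` is extensive with respect to the same order as `g`. -/
theorem gZ_extensive (G : SimpleGraph V) [DecidableRel G.Adj]
    (I O : Finset V) (lam : V → MPlane) (g : V → Finset V)
    (r : V → V → Prop) (hr : IsStrictOrder V r)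
    (hext : IsExtensive O r (fun u => g u ∪ oddNbhd G (g u)))
    (hg : IsGflow G I O lam g)
    (gZ : V → Finset V)
    (hgZ : ∀ u ∉ O, gZ u = g u ∆ symmDiffFold ((g u) \ insert u O) gZ) :
    IsExtensive O r (fun u => gZ u ∪ oddNbhd G (gZ u)) :=
  gZ_extensive_general G O g r hr hext gZ hgZ
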